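/- For every Laurent polynomial f ∈ ℤ[t,t⁻¹] with f(1) = 0 and f'(1) = 0, there exists a finite signed directed multigraph Γ (a disjoint union of the intersection graphs Γ(L_k), Γ(L_k^{-1}), Γ(R_k), Γ(R_k^{-1})) with P_Γ(t) = f(t), where P_Γ(t) = ∑_v w(v) t^{Ind(v)} − ∑_v w(v). -/

import Mathlib

open Finset LaurentPolynomial

/-- A finite directed multigraph with vertex signs `w : V → {+1, −1}`. -/
structure SDGraph where
  V : Type
  [instFintypeV : Fintype V]
  [instDecEqV : DecidableEq V]
  E : Type
  [instFintypeE : Fintype E]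
  src : E → V
  tgt : E → V
  w : V → ℤ
  sign : ∀ v, w v = 1 ∨ w v = -1

attribute [instance] SDGraph.instFintypeV SDGraph.instDecEqV SDGraph.instFintypeE

/-- The index of a vertex:
`Ind(v) = ∑_{edges u→v} w(u) − ∑_{edges v→u} w(u)` (sums over edges, with multiplicity). -/
def SDGraph.Ind (G : SDGraph) (v : G.V) : ℤ :=
  (∑ e ∈ univ.filter (fun e => G.tgt e = v), G.w (G.src e))
    - (∑ e ∈ univ.filter (fun e => G.src e = v), G.w (G.tgt e))

/-- The graph polynomial `P_Γ(t) = ∑_v w(v) t^{Ind(v)} − ∑_v w(v)`. -/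
noncomputable def SDGraph.P (G : SDGraph) : LaurentPolynomial ℤ :=
  (∑ v, C (G.w v) * T (G.Ind v)) - C (∑ v, G.w v)

/-- Evaluation of a Laurent polynomial at `t = 1` (the sum of its coefficients). -/
def evalOne (f : LaurentPolynomial ℤ) : ℤ := f.coeff.sum fun _ a => a

/-- Evaluation of the formal derivative of a Laurent polynomial at `t = 1`. -/
def derivOne (f : LaurentPolynomial ℤ) : ℤ := f.coeff.sum fun n a => n * a

/-- The empty graph. -/
def SDGraph.empty : SDGraph where
  V := Empty
  E := Empty
  src := Empty.elim
  tgt := Empty.elim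
  w := Empty.elim
  sign v := v.elim

/-- The disjoint union of two signed directed multigraphs. -/
def SDGraph.disjUnion (G H : SDGraph) : SDGraph where
  V := G.V ⊕ H.V
  E := G.E ⊕ H.E
  src := Sum.map G.src H.src
  tgt := Sum.map G.tgt H.tgt
  w := Sum.elim G.w H.w
  sign v := Sum.rec (fun a => G.sign a) (fun b => H.sign b) v

/-- `Γ(L_k)`: a star with central vertex `0` of sign `+1` and `k` leaves of sign `+1`,
each joined to the centre by an edge directed from the leaf to the centre. -/
def GammaL (k : ℕ) : SDGraph where
  V := Fin (k + 1)
  E := Fin k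
  src e := e.succ
  tgt _ := 0
  w _ := 1
  sign _ := Or.inl rfl

/-- `Γ(L_k⁻¹)`: the star `Γ(L_k)` with all edge directions reversed. -/
def GammaLinv (k : ℕ) : SDGraph where
  V := Fin (k + 1)
  E := Fin k
  src _ := 0
  tgt e := e.succ
  w _ := 1
  sign _ := Or.inl rfl

/-- `Γ(R_k)`: the star `Γ(L_k)` with all signs flipped. -/
def GammaR (k : ℕ) : SDGraph where
  V := Fin (k + 1)
  E := Fin k
  src e := e.succ
  tgt _ := 0
  w _ := -1
  sign _ := Or.inr rfl

/-- `Γ(R_k⁻¹)`: the star `Γ(L_k)` with all edge directions reversed and all signs flipped. -/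
def GammaRinv (k : ℕ) : SDGraph where
  V := Fin (k + 1)
  E := Fin k
  src _ := 0
  tgt e := e.succ
  w _ := -1
  sign _ := Or.inr rfl

/-! Put `E n = t ^ n - 1 - n (t - 1)`. Every `f` is `f(1) + f'(1) (t - 1) + ∑ₙ fₙ E n`, so the two
conditions place `f` in the additive group generated by the `E n`. Reversing all edges turns
`P_Γ(t)` into `P_Γ(t⁻¹)` and flipping all signs turns it into `-P_Γ(t⁻¹)`. Hence from
`P_{Γ(L_k)} = t ^ k + k t⁻¹ - (k + 1)` we get `E (-k) = P_{Γ(L_k⁻¹)}` and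
`E k = P_{Γ(L_k)} - k P_{Γ(L_1)}`, and the set of star polynomials is closed under negation. As `P`
is additive under disjoint union, every element of the group generated by the star polynomials is
the polynomial of a disjoint union of stars. -/

namespace SDGraph

lemma P_empty : empty.P = 0 := by
  have : IsEmpty empty.V := inferInstanceAs (IsEmpty Empty)
  simp [P]

section disjUnion

variable {M : Type*} [AddCommMonoid M] (G H : SDGraph)

lemma sum_V_disjUnion (F : (G.disjUnion H).V → M) :
    ∑ v, F v = ∑ v, F (.inl v) + ∑ v, F (.inr v) :=
  Fintype.sum_sum_type F

lemma sum_E_disjUnion (F : (G.disjUnion H).E → M) :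
    ∑ e, F e = ∑ e, F (.inl e) + ∑ e, F (.inr e) :=
  Fintype.sum_sum_type F

lemma Ind_disjUnion_inl (v : G.V) : (G.disjUnion H).Ind (.inl v) = G.Ind v := by
  simp only [Ind, Finset.sum_filter]
  rw [sum_E_disjUnion, sum_E_disjUnion]
  simp [disjUnion]

lemma Ind_disjUnion_inr (v : H.V) : (G.disjUnion H).Ind (.inr v) = H.Ind v := by
  simp only [Ind, Finset.sum_filter]
  rw [sum_E_disjUnion, sum_E_disjUnion]
  simp [disjUnion]

lemma P_disjUnion : (G.disjUnion H).P = G.P + H.P := by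
  simp only [P, sum_V_disjUnion, Ind_disjUnion_inl, Ind_disjUnion_inr, map_add]
  simp only [disjUnion, Sum.elim_inl, Sum.elim_inr]
  ring

end disjUnion

lemma P_foldr_disjUnion (l : List SDGraph) : (l.foldr disjUnion empty).P = (l.map P).sum := by
  induction l with
  | nil => exact P_empty
  | cons G l ih => rw [List.foldr_cons, P_disjUnion, ih, List.map_cons, List.sum_cons]

abbrev reverse (G : SDGraph) : SDGraph where
  V := G.V
  E := G.E
  src := G.tgt
  tgt := G.src
  w := G.w
  sign := G.sign

abbrev negSigns (G : SDGraph) : SDGraph where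
  V := G.V
  E := G.E
  src := G.src
  tgt := G.tgt
  w v := -G.w v
  sign v := by rcases G.sign v with h | h <;> simp [h]

lemma Ind_reverse (G : SDGraph) (v : G.V) : G.reverse.Ind v = -G.Ind v :=
  (neg_sub _ _).symm

lemma Ind_negSigns (G : SDGraph) (v : G.V) : G.negSigns.Ind v = -G.Ind v := by
  simp only [Ind, sum_neg_distrib, neg_sub_neg, neg_sub]

lemma P_reverse (G : SDGraph) : G.reverse.P = invert G.P := by
  simp only [P, map_sub, map_sum, map_mul, invert_C, invert_T, Ind_reverse]

lemma P_negSigns (G : SDGraph) : G.negSigns.P = -invert G.P := by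
  simp only [P, eq_intCast, Int.cast_neg, Ind_negSigns, neg_mul, sum_neg_distrib, Int.cast_sum,
    sub_neg_eq_add, map_sum, map_sub, map_mul, map_intCast, invert_T, neg_sub]
  abel

end SDGraph

open SDGraph

lemma GammaLinv_eq_reverse (k : ℕ) : GammaLinv k = (GammaL k).reverse := rfl

lemma GammaR_eq_negSigns (k : ℕ) : GammaR k = (GammaL k).negSigns := rfl

lemma GammaRinv_eq_negSigns (k : ℕ) : GammaRinv k = (GammaLinv k).negSigns := rfl

lemma sum_V_GammaL {M : Type*} [AddCommMonoid M] (k : ℕ) (F : (GammaL k).V → M) :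
    ∑ v, F v = F (0 : Fin (k + 1)) + ∑ j : Fin k, F j.succ :=
  Fin.sum_univ_succ F

lemma Ind_GammaL_zero (k : ℕ) : (GammaL k).Ind (0 : Fin (k + 1)) = k := by
  simp only [Ind, GammaL, filter_true, sum_const, Int.nsmul_eq_mul, mul_one, Fin.succ_ne_zero,
    filter_false, card_empty, zero_nsmul, sub_zero, Nat.cast_inj]
  exact card_fin k

lemma Ind_GammaL_succ (k : ℕ) (j : Fin k) : (GammaL k).Ind j.succ = -1 := by
  simp only [Ind, GammaL, (Fin.succ_ne_zero j).symm, filter_false, sum_const, card_empty,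
    zero_nsmul, Fin.succ_inj, filter_eq', Int.nsmul_eq_mul, mul_one, zero_sub, neg_inj,
    Nat.cast_eq_one]
  exact if_pos (mem_univ j) ▸ card_singleton j

lemma P_GammaL (k : ℕ) :
    (GammaL k).P = T k + (k : ℤ[T;T⁻¹]) * T (-1) - ((k : ℤ[T;T⁻¹]) + 1) := by
  simp only [P, sum_V_GammaL, Ind_GammaL_zero, Ind_GammaL_succ]
  simp only [GammaL, eq_intCast, Int.cast_one, one_mul, sum_const, card_univ, Fintype.card_fin,
    nsmul_eq_mul, mul_one]
  push_cast
  ring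

lemma P_GammaLinv (k : ℕ) :
    (GammaLinv k).P = T (-k) + (k : ℤ[T;T⁻¹]) * T 1 - ((k : ℤ[T;T⁻¹]) + 1) := by
  simp [GammaLinv_eq_reverse, P_reverse, P_GammaL]

lemma P_GammaR (k : ℕ) : (GammaR k).P = -(GammaLinv k).P := by
  rw [GammaR_eq_negSigns, P_negSigns, GammaLinv_eq_reverse, P_reverse]

lemma P_GammaRinv (k : ℕ) : (GammaRinv k).P = -(GammaL k).P := by
  rw [GammaRinv_eq_negSigns, P_negSigns, GammaLinv_eq_reverse, P_reverse, involutive_invert]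

def IsStar (Γ : SDGraph) : Prop :=
  ∃ k : ℕ, Γ = GammaL k ∨ Γ = GammaLinv k ∨ Γ = GammaR k ∨ Γ = GammaRinv k

lemma IsStar.exists_P_eq_neg {Γ : SDGraph} (h : IsStar Γ) : ∃ Γ', IsStar Γ' ∧ Γ'.P = -Γ.P := by
  obtain ⟨k, rfl | rfl | rfl | rfl⟩ := h
  · exact ⟨GammaRinv k, ⟨k, by simp⟩, P_GammaRinv k⟩
  · exact ⟨GammaR k, ⟨k, by simp⟩, P_GammaR k⟩
  · exact ⟨GammaLinv k, ⟨k, by simp⟩, by rw [P_GammaR, neg_neg]⟩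
  · exact ⟨GammaL k, ⟨k, by simp⟩, by rw [P_GammaRinv, neg_neg]⟩

def starPolynomials : Set ℤ[T;T⁻¹] := P '' {Γ | IsStar Γ}

lemma exists_star_list_of_mem_closure_starPolynomials {p : ℤ[T;T⁻¹]}
    (hp : p ∈ AddSubgroup.closure starPolynomials) :
    ∃ l : List SDGraph, (∀ Γ ∈ l, IsStar Γ) ∧ (l.foldr disjUnion empty).P = p := by
  simp only [P_foldr_disjUnion]
  induction hp using AddSubgroup.closure_induction'' with
  | mem _ hx =>
    obtain ⟨Γ, hΓ, rfl⟩ := hx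
    exact ⟨[Γ], by simpa using hΓ, by simp⟩
  | neg_mem _ hx =>
    obtain ⟨Γ, hΓ, rfl⟩ := hx
    obtain ⟨Γ', hΓ', hP⟩ := hΓ.exists_P_eq_neg
    exact ⟨[Γ'], by simpa using hΓ', by simpa using hP⟩
  | zero => exact ⟨[], by simp, by simp⟩
  | add _ _ _ _ hp hq =>
    obtain ⟨l₁, hl₁, rfl⟩ := hp
    obtain ⟨l₂, hl₂, rfl⟩ := hq
    exact ⟨l₁ ++ l₂, fun Γ hΓ => (List.mem_append.1 hΓ).elim (hl₁ Γ) (hl₂ Γ), by simp⟩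

lemma evalOne_add (f g : ℤ[T;T⁻¹]) : evalOne (f + g) = evalOne f + evalOne g :=
  Finsupp.sum_add_index' (fun _ => rfl) fun _ _ _ => rfl

lemma derivOne_add (f g : ℤ[T;T⁻¹]) : derivOne (f + g) = derivOne f + derivOne g :=
  Finsupp.sum_add_index' (fun _ => mul_zero _) fun _ => mul_add _

lemma evalOne_C_mul_T (a n : ℤ) : evalOne (C a * T n) = a := by
  rw [evalOne, ← single_eq_C_mul_T]
  exact Finsupp.sum_single_index rfl

lemma derivOne_C_mul_T (a n : ℤ) : derivOne (C a * T n) = n * a := by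
  rw [derivOne, ← single_eq_C_mul_T]
  exact Finsupp.sum_single_index (mul_zero _)

noncomputable def taylorRemainderT (n : ℤ) : ℤ[T;T⁻¹] :=
  T n - 1 - (n : ℤ[T;T⁻¹]) * (T 1 - 1)

lemma sub_taylor_mem_closure_range_taylorRemainderT (f : ℤ[T;T⁻¹]) :
    f - (evalOne f : ℤ[T;T⁻¹]) - (derivOne f : ℤ[T;T⁻¹]) * (T 1 - 1) ∈
      AddSubgroup.closure (Set.range taylorRemainderT) := by
  induction f using LaurentPolynomial.induction_on' with
  | add p q hp hq =>
    convert add_mem hp hq using 1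
    push_cast [evalOne_add, derivOne_add]
    ring
  | C_mul_T n a =>
    convert zsmul_mem (AddSubgroup.subset_closure (Set.mem_range_self n)) a using 1
    rw [evalOne_C_mul_T, derivOne_C_mul_T, taylorRemainderT, zsmul_eq_mul, eq_intCast]
    push_cast
    ring

lemma taylorRemainderT_mem_closure_starPolynomials (n : ℤ) :
    taylorRemainderT n ∈ AddSubgroup.closure starPolynomials := by
  have hstar : ∀ Γ, IsStar Γ → Γ.P ∈ AddSubgroup.closure starPolynomials :=
    fun Γ hΓ => AddSubgroup.subset_closure ⟨Γ, hΓ, rfl⟩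
  obtain ⟨k, rfl | rfl⟩ := Int.eq_nat_or_neg n
  · have : taylorRemainderT k = (GammaL k).P - k • (GammaL 1).P := by
      rw [taylorRemainderT, P_GammaL, P_GammaL]
      push_cast
      ring
    rw [this]
    exact sub_mem (hstar _ ⟨k, .inl rfl⟩) (nsmul_mem (hstar _ ⟨1, .inl rfl⟩) k)
  · have : taylorRemainderT (-k) = (GammaLinv k).P := by
      rw [taylorRemainderT, P_GammaLinv]
      push_cast
      ring
    rw [this]
    exact hstar _ ⟨k, .inr (.inl rfl)⟩

/-- Every Laurent polynomial `f` with `f(1) = 0` and `f'(1) = 0` is realized as the graph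
polynomial of a disjoint union of the star graphs `Γ(L_k), Γ(L_k⁻¹), Γ(R_k), Γ(R_k⁻¹)`. -/
theorem realization_of_graphPolynomial (f : LaurentPolynomial ℤ)
    (h1 : evalOne f = 0) (h2 : derivOne f = 0) :
    ∃ l : List SDGraph,
      (∀ Γ ∈ l, ∃ k : ℕ, Γ = GammaL k ∨ Γ = GammaLinv k ∨ Γ = GammaR k ∨ Γ = GammaRinv k) ∧
      (l.foldr SDGraph.disjUnion SDGraph.empty).P = f := by
  have hf : f ∈ AddSubgroup.closure (Set.range taylorRemainderT) := by
    simpa [h1, h2] using sub_taylor_mem_closure_range_taylorRemainderT f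
  have hle : AddSubgroup.closure (Set.range taylorRemainderT)
      ≤ AddSubgroup.closure starPolynomials :=
    AddSubgroup.closure_le _ |>.2 <| Set.range_subset_iff.2 taylorRemainderT_mem_closure_starPolynomials
  exact exists_star_list_of_mem_closure_starPolynomials (hle hf)
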